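/- arXiv:2311.06104 — 2 statements merged into one kernel-verified Lean document; each statement's English description precedes it below -/
import Mathlib

section
/- Let N, K ∈ ℕ, let A ∈ ℝ^{2N×2K} satisfy Aᵀ J_{2N} A = J_{2K} with symplectic inverse A⁺ = J_{2K}ᵀ Aᵀ J_{2N}, and let H : ℝ^{2N} → ℝ be differentiable. Then for every ȳ ∈ ℝ^{2K}, the symplectically projected vector field satisfies A⁺ J_{2N} ∇H(A ȳ) = J_{2K} ∇(H ∘ A)(ȳ), where H ∘ A : ℝ^{2K} → ℝ is the reduced Hamiltonian ȳ ↦ H(Aȳ). -/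
open Matrix

noncomputable section

/-- The canonical symplectic matrix `J_{2n} = [[0, I], [-I, 0]]`. -/
def symplJ (n : ℕ) : Matrix (Fin n ⊕ Fin n) (Fin n ⊕ Fin n) ℝ :=
  Matrix.fromBlocks 0 1 (-1) 0

/-- The symplectic inverse `A⁺ = J_{2K}ᵀ Aᵀ J_{2N}` of a rectangular matrix
`A ∈ ℝ^{2N×2K}`. -/
def symplInv {N K : ℕ} (A : Matrix (Fin N ⊕ Fin N) (Fin K ⊕ Fin K) ℝ) :
    Matrix (Fin K ⊕ Fin K) (Fin N ⊕ Fin N) ℝ :=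
  (symplJ K)ᵀ * Aᵀ * symplJ N

/-!
The chain rule gives `∇(f ∘ L)(x) = L† ∇f(Lx)`, i.e. `∇(H ∘ A)(ȳ) = Aᵀ ∇H(Aȳ)` for a real
matrix `A`. Since `J_{2N}² = -1` and `J_{2K}ᵀ = -J_{2K}`, we get
`A⁺ J_{2N} = J_{2K}ᵀ Aᵀ J_{2N}² = J_{2K} Aᵀ`.
-/

section Gradient

variable {𝕜 E F : Type*} [RCLike 𝕜]
  [NormedAddCommGroup E] [InnerProductSpace 𝕜 E] [CompleteSpace E]
  [NormedAddCommGroup F] [InnerProductSpace 𝕜 F] [CompleteSpace F]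

theorem HasGradientAt.comp_continuousLinearMap {f : F → 𝕜} {f' : F} {x : E}
    (L : E →L[𝕜] F) (hf : HasGradientAt f f' (L x)) :
    HasGradientAt (f ∘ L) (L.adjoint f') x := by
  have hdual : (InnerProductSpace.toDual 𝕜 F f').comp L =
      InnerProductSpace.toDual 𝕜 E (L.adjoint f') := by
    ext v
    exact (L.adjoint_inner_left v f').symm
  rw [hasGradientAt_iff_hasFDerivAt, ← hdual]
  exact hf.hasFDerivAt.comp x L.hasFDerivAt

theorem gradient_comp_toEuclideanLin {m n : Type*} [Fintype m] [Fintype n] [DecidableEq m]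
    [DecidableEq n] {f : EuclideanSpace 𝕜 m → 𝕜} (A : Matrix m n 𝕜) {x : EuclideanSpace 𝕜 n}
    (hf : DifferentiableAt 𝕜 f (A.toEuclideanLin x)) :
    gradient (fun z => f (A.toEuclideanLin z)) x =
      Aᴴ.toEuclideanLin (gradient f (A.toEuclideanLin x)) := by
  rw [Matrix.toEuclideanLin_conjTranspose_eq_adjoint, LinearMap.adjoint_eq_toCLM_adjoint]
  exact (hf.hasGradientAt.comp_continuousLinearMap
    A.toEuclideanLin.toContinuousLinearMap).gradient

end Gradient

theorem symplJ_transpose (n : ℕ) : (symplJ n)ᵀ = -symplJ n := by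
  simp [symplJ, fromBlocks_transpose, fromBlocks_neg]

theorem symplJ_mul_self (n : ℕ) : symplJ n * symplJ n = -1 := by
  simp [symplJ, fromBlocks_multiply, ← fromBlocks_one, fromBlocks_neg]

theorem symplInv_mul_symplJ {N K : ℕ} (A : Matrix (Fin N ⊕ Fin N) (Fin K ⊕ Fin K) ℝ) :
    symplInv A * symplJ N = symplJ K * Aᵀ := by
  rw [symplInv, symplJ_transpose, Matrix.mul_assoc, symplJ_mul_self]
  simp

theorem symplectic_galerkin_reduced_vector_field_general
    (N K : ℕ) (A : Matrix (Fin N ⊕ Fin N) (Fin K ⊕ Fin K) ℝ)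
    (H : EuclideanSpace ℝ (Fin N ⊕ Fin N) → ℝ)
    (hH : Differentiable ℝ H) :
    ∀ ybar : EuclideanSpace ℝ (Fin K ⊕ Fin K),
      Matrix.toEuclideanLin (symplInv A)
        (Matrix.toEuclideanLin (symplJ N) (gradient H (Matrix.toEuclideanLin A ybar)))
      = Matrix.toEuclideanLin (symplJ K)
          (gradient (fun z => H (Matrix.toEuclideanLin A z)) ybar) := by
  intro ybar
  rw [gradient_comp_toEuclideanLin A (hH _), conjTranspose_eq_transpose_of_trivial,
    ← LinearMap.comp_apply, ← toLpLin_mul_same, symplInv_mul_symplJ, toLpLin_mul_same,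
    LinearMap.comp_apply]

/-- For a symplectic matrix `A` and a differentiable Hamiltonian `H`, the symplectically
projected vector field satisfies `A⁺ J_{2N} ∇H(Aȳ) = J_{2K} ∇(H∘A)(ȳ)`, where
`H∘A` is the reduced Hamiltonian. -/
theorem symplectic_galerkin_reduced_vector_field
    (N K : ℕ) (A : Matrix (Fin N ⊕ Fin N) (Fin K ⊕ Fin K) ℝ)
    (hA : Aᵀ * symplJ N * A = symplJ K)
    (H : EuclideanSpace ℝ (Fin N ⊕ Fin N) → ℝ)
    (hH : Differentiable ℝ H) :
    ∀ ybar : EuclideanSpace ℝ (Fin K ⊕ Fin K),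
      Matrix.toEuclideanLin (symplInv A)
        (Matrix.toEuclideanLin (symplJ N) (gradient H (Matrix.toEuclideanLin A ybar)))
      = Matrix.toEuclideanLin (symplJ K)
          (gradient (fun z => H (Matrix.toEuclideanLin A z)) ybar) :=
  symplectic_galerkin_reduced_vector_field_general N K A H hH
end
end

section
/- Let N ∈ ℕ, Δt ∈ ℝ, and let H₁, H₂ : ℝ^N → ℝ be twice continuously differentiable. Define the explicit Störmer–Verlet one-step map Ψ : ℝ^N × ℝ^N → ℝ^N × ℝ^N by Ψ(q,p) = (q₁, p₁) where p_{1/2} = p − (Δt/2) ∇H₁(q), q₁ = q + Δt ∇H₂(p_{1/2}), p₁ = p_{1/2} − (Δt/2) ∇H₁(q₁). Then Ψ is differentiable and its derivative is symplectic at every point: for all (q,p) and all u, v ∈ ℝ^{2N}, ⟨DΨ(q,p)u, J_{2N} DΨ(q,p)v⟩ = ⟨u, J_{2N} v⟩. -/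
/-
The Störmer–Verlet step factors as kick ∘ drift ∘ kick, where a kick `(q, p) ↦ (q, p - c ∇f(q))`
and a drift `(q, p) ↦ (q + c ∇g(p), p)` are shears whose off-diagonal block is `c` times a
Hessian. Symmetry of the Hessian (Schwarz) makes each shear's derivative preserve
`⟪u₁, v₂⟫ - ⟪u₂, v₁⟫`, and the chain rule composes these.
-/

open scoped RealInnerProductSpace

noncomputable section

/-- One step of the explicit Störmer–Verlet scheme for the separable Hamiltonian
`H(q,p) = H₁(q) + H₂(p)` with time step `Δt`. -/
def verletStep (N : ℕ) (Δt : ℝ) (H₁ H₂ : EuclideanSpace ℝ (Fin N) → ℝ)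
    (x : EuclideanSpace ℝ (Fin N) × EuclideanSpace ℝ (Fin N)) :
    EuclideanSpace ℝ (Fin N) × EuclideanSpace ℝ (Fin N) :=
  let phalf := x.2 - (Δt / 2) • gradient H₁ x.1
  let q1 := x.1 + Δt • gradient H₂ phalf
  let p1 := phalf - (Δt / 2) • gradient H₁ q1
  (q1, p1)

/-- The canonical symplectic bilinear form `(u, v) ↦ ⟨u, J_{2N} v⟩` on
`ℝ^{2N} = ℝ^N × ℝ^N`, where `J_{2N} = [[0, I], [-I, 0]]`, so that
`⟨u, J v⟩ = ⟨u₁, v₂⟩ - ⟨u₂, v₁⟩`. -/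
def canonicalForm (N : ℕ)
    (u v : EuclideanSpace ℝ (Fin N) × EuclideanSpace ℝ (Fin N)) : ℝ :=
  ⟪u.1, v.2⟫ - ⟪u.2, v.1⟫

section Gradient

variable {F : Type*} [NormedAddCommGroup F] [InnerProductSpace ℝ F] [CompleteSpace F]
  {f : F → ℝ} {x : F}

theorem ContDiffAt.differentiableAt_gradient (hf : ContDiffAt ℝ 2 f x) :
    DifferentiableAt ℝ (gradient f) x :=
  (InnerProductSpace.toDual ℝ F).symm.differentiableAt.comp x
    ((hf.fderiv_right (m := 1) le_rfl).differentiableAt one_ne_zero)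

theorem inner_fderiv_gradient (f : F → ℝ) (x u v : F) :
    ⟪fderiv ℝ (gradient f) x u, v⟫ = fderiv ℝ (fderiv ℝ f) x u v := by
  have hgrad : gradient f = (InnerProductSpace.toDual ℝ F).symm ∘ fderiv ℝ f := rfl
  rw [hgrad, LinearIsometryEquiv.comp_fderiv]
  exact InnerProductSpace.toDual_symm_apply

theorem ContDiffAt.inner_fderiv_gradient_comm (hf : ContDiffAt ℝ 2 f x) (u v : F) :
    ⟪fderiv ℝ (gradient f) x u, v⟫ = ⟪u, fderiv ℝ (gradient f) x v⟫ := by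
  rw [inner_fderiv_gradient, real_inner_comm, inner_fderiv_gradient]
  exact hf.isSymmSndFDerivAt minSmoothness_of_isRCLikeNormedField.le u v

end Gradient

namespace StormerVerlet

section Shears

variable {F : Type*} [NormedAddCommGroup F] [InnerProductSpace ℝ F] [CompleteSpace F]
  {c : ℝ} {f : F → ℝ} {x : F × F}

def kick (c : ℝ) (f : F → ℝ) (x : F × F) : F × F := (x.1, x.2 - c • gradient f x.1)

def drift (c : ℝ) (f : F → ℝ) (x : F × F) : F × F := (x.1 + c • gradient f x.2, x.2)

theorem hasFDerivAt_kick (hf : ContDiffAt ℝ 2 f x.1) :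
    HasFDerivAt (kick c f)
      ((ContinuousLinearMap.fst ℝ F F).prod (ContinuousLinearMap.snd ℝ F F -
        c • (fderiv ℝ (gradient f) x.1).comp (ContinuousLinearMap.fst ℝ F F))) x :=
  hasFDerivAt_fst.prodMk <| hasFDerivAt_snd.sub <|
    (hf.differentiableAt_gradient.hasFDerivAt.comp x hasFDerivAt_fst).const_smul c

theorem hasFDerivAt_drift (hf : ContDiffAt ℝ 2 f x.2) :
    HasFDerivAt (drift c f)
      ((ContinuousLinearMap.fst ℝ F F +
        c • (fderiv ℝ (gradient f) x.2).comp (ContinuousLinearMap.snd ℝ F F)).prod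
        (ContinuousLinearMap.snd ℝ F F)) x :=
  (hasFDerivAt_fst.add <|
    (hf.differentiableAt_gradient.hasFDerivAt.comp x hasFDerivAt_snd).const_smul c).prodMk
    hasFDerivAt_snd

theorem differentiable_kick (hf : ContDiff ℝ 2 f) : Differentiable ℝ (kick c f) := fun _ =>
  (hasFDerivAt_kick hf.contDiffAt).differentiableAt

theorem differentiable_drift (hf : ContDiff ℝ 2 f) : Differentiable ℝ (drift c f) := fun _ =>
  (hasFDerivAt_drift hf.contDiffAt).differentiableAt

end Shears

variable {N : ℕ}

def IsSymplectic (L : EuclideanSpace ℝ (Fin N) × EuclideanSpace ℝ (Fin N) →L[ℝ]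
      EuclideanSpace ℝ (Fin N) × EuclideanSpace ℝ (Fin N)) : Prop :=
  ∀ u v, canonicalForm N (L u) (L v) = canonicalForm N u v

theorem IsSymplectic.comp {L M : EuclideanSpace ℝ (Fin N) × EuclideanSpace ℝ (Fin N) →L[ℝ]
      EuclideanSpace ℝ (Fin N) × EuclideanSpace ℝ (Fin N)} (hL : IsSymplectic L)
    (hM : IsSymplectic M) : IsSymplectic (L.comp M) := fun u v => by
  rw [L.comp_apply, L.comp_apply, hL, hM]

theorem verletStep_eq_kick_drift_kick (Δt : ℝ) (H₁ H₂ : EuclideanSpace ℝ (Fin N) → ℝ) :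
    verletStep N Δt H₁ H₂ = kick (Δt / 2) H₁ ∘ drift Δt H₂ ∘ kick (Δt / 2) H₁ := rfl

variable {c : ℝ} {f : EuclideanSpace ℝ (Fin N) → ℝ}
  {x : EuclideanSpace ℝ (Fin N) × EuclideanSpace ℝ (Fin N)}

theorem isSymplectic_fderiv_kick (hf : ContDiffAt ℝ 2 f x.1) :
    IsSymplectic (fderiv ℝ (kick c f) x) := fun u v => by
  rw [(hasFDerivAt_kick hf).fderiv]
  simp only [canonicalForm, ContinuousLinearMap.prod_apply, ContinuousLinearMap.coe_fst',
    ContinuousLinearMap.coe_snd', sub_apply, smul_apply, ContinuousLinearMap.comp_apply,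
    inner_sub_left, inner_sub_right, real_inner_smul_left, real_inner_smul_right,
    hf.inner_fderiv_gradient_comm]
  ring

theorem isSymplectic_fderiv_drift (hf : ContDiffAt ℝ 2 f x.2) :
    IsSymplectic (fderiv ℝ (drift c f) x) := fun u v => by
  rw [(hasFDerivAt_drift hf).fderiv]
  simp only [canonicalForm, ContinuousLinearMap.prod_apply, ContinuousLinearMap.coe_fst',
    ContinuousLinearMap.coe_snd', add_apply, smul_apply, ContinuousLinearMap.comp_apply,
    inner_add_left, inner_add_right, real_inner_smul_left, real_inner_smul_right,
    hf.inner_fderiv_gradient_comm]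
  ring

end StormerVerlet

open StormerVerlet

/-- The explicit Störmer–Verlet one-step map is differentiable and its derivative is
symplectic at every point: it preserves the canonical symplectic bilinear form
`(u,v) ↦ ⟨u, J_{2N} v⟩`. -/
theorem stormer_verlet_symplectic
    (N : ℕ) (Δt : ℝ)
    (H₁ H₂ : EuclideanSpace ℝ (Fin N) → ℝ)
    (hH₁ : ContDiff ℝ 2 H₁) (hH₂ : ContDiff ℝ 2 H₂) :
    Differentiable ℝ (verletStep N Δt H₁ H₂) ∧
      ∀ (x u v : EuclideanSpace ℝ (Fin N) × EuclideanSpace ℝ (Fin N)),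
        canonicalForm N (fderiv ℝ (verletStep N Δt H₁ H₂) x u)
            (fderiv ℝ (verletStep N Δt H₁ H₂) x v)
          = canonicalForm N u v := by
  have hkick : Differentiable ℝ (kick (Δt / 2) H₁) := differentiable_kick hH₁
  have hdrift : Differentiable ℝ (drift Δt H₂) := differentiable_drift hH₂
  rw [verletStep_eq_kick_drift_kick]
  refine ⟨hkick.comp (hdrift.comp hkick), fun x => ?_⟩
  rw [fderiv_comp x (hkick _) ((hdrift.comp hkick) x), fderiv_comp x (hdrift _) (hkick x)]
  exact (isSymplectic_fderiv_kick hH₁.contDiffAt).comp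
    ((isSymplectic_fderiv_drift hH₂.contDiffAt).comp (isSymplectic_fderiv_kick hH₁.contDiffAt))
end
end
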